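/- Along any solution of the continuous inertial mirror descent system, for every t > 0 the following integrated bound holds: ∫₀ᵗ f(x(s)) ds − t·f* ≤ V(x*) − μ(t)·(f(x(t)) − f*) + μ(0)·(f(x(0)) − f*) + (sup_{s∈[0,t]} μ'(s)) · ∫₀ᵗ (f(x(s)) − f*) ds, where V(x*) = sup_ζ (⟨ζ, x*⟩ − W(ζ)) is the Legendre–Fenchel conjugate of W evaluated at x*. -/

import Mathlib

open RealInnerProductSpace

/-!
The proof is a Lyapunov argument. With `g s = f (x s) - f x⋆` and `M` the supremum of `μ'` on
`[0, t]`, the energy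
`E s = ⟪ζ s, x⋆⟫ - W (ζ s) - μ s * g s + (M - 1) * ∫₀ˢ g`
satisfies, by the two equations of the system,
`E' s = ⟪∇f (x s), x s - x⋆⟫ - g s + (M - μ' s) * g s`,
which is nonnegative by the gradient inequality for convex `f` and `g ≥ 0`.
Hence `E 0 ≤ E t`; bounding `⟪ζ t, x⋆⟫ - W (ζ t)` by the conjugate `V x⋆` gives the claim.
-/

theorem ConvexOn.le_sub_of_hasFDerivAt {E : Type*} [NormedAddCommGroup E] [NormedSpace ℝ E]
    {s : Set E} {f : E → ℝ} {f' : E →L[ℝ] ℝ} {a b : E}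
    (hf : ConvexOn ℝ s f) (ha : a ∈ s) (hb : b ∈ s) (hfa : HasFDerivAt f f' a) :
    f' (b - a) ≤ f b - f a := by
  let ℓ : ℝ →ᵃ[ℝ] E := AffineMap.lineMap a b
  have hline : ConvexOn ℝ (ℓ ⁻¹' s) (f ∘ ℓ) := hf.comp_affineMap ℓ
  have hderiv : HasDerivAt (f ∘ ℓ) (f' (b - a)) 0 :=
    (by simpa [ℓ] using hfa : HasFDerivAt f f' (ℓ 0)).comp_hasDerivAt 0
      AffineMap.hasDerivAt_lineMap
  simpa [slope_def_field, ℓ] using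
    hline.le_slope_of_hasDerivAt (by simpa [ℓ] using ha) (by simpa [ℓ] using hb) one_pos hderiv

section Gradient

variable {F : Type*} [NormedAddCommGroup F] [InnerProductSpace ℝ F] [CompleteSpace F]

theorem ConvexOn.inner_gradient_sub_le {s : Set F} {f : F → ℝ} {a b : F}
    (hf : ConvexOn ℝ s f) (ha : a ∈ s) (hb : b ∈ s) (hfa : DifferentiableAt ℝ f a) :
    ⟪gradient f a, b - a⟫ ≤ f b - f a := by
  simpa [inner_gradient_left] using hf.le_sub_of_hasFDerivAt ha hb hfa.hasFDerivAt

theorem HasGradientAt.comp_hasDerivAt {g : F → ℝ} {g' : F} {γ : ℝ → F} {γ' : F} {t : ℝ}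
    (hg : HasGradientAt g g' (γ t)) (hγ : HasDerivAt γ γ' t) :
    HasDerivAt (fun r => g (γ r)) ⟪g', γ'⟫ t :=
  hg.hasFDerivAt.comp_hasDerivAt t hγ

end Gradient

section InertialMirrorDescent

variable {H : Type*} [NormedAddCommGroup H] [InnerProductSpace ℝ H]
  (f W : H → ℝ) (μ : ℝ → ℝ) (ζ x : ℝ → H) (xstar : H) (M : ℝ)

noncomputable def imdEnergy (s : ℝ) : ℝ :=
  ⟪ζ s, xstar⟫ - W (ζ s) - μ s * (f (x s) - f xstar)
    + (M - 1) * ∫ u in (0 : ℝ)..s, (f (x u) - f xstar)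

variable {f W μ ζ x}

theorem imdEnergy_zero (hW0 : W 0 = 0) (hζ0 : ζ 0 = 0) :
    imdEnergy f W μ ζ x xstar M 0 = -(μ 0 * (f (x 0) - f xstar)) := by
  simp [imdEnergy, hW0, hζ0]

variable [CompleteSpace H]

theorem hasDerivAt_imdEnergy (hf : Differentiable ℝ f) (hW : Differentiable ℝ W)
    (hμ : Differentiable ℝ μ) (hζ : Differentiable ℝ ζ) (hx : Differentiable ℝ x) (s : ℝ) :
    HasDerivAt (imdEnergy f W μ ζ x xstar M)
      (⟪deriv ζ s, xstar⟫ - ⟪gradient W (ζ s), deriv ζ s⟫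
        - (deriv μ s * (f (x s) - f xstar) + μ s * ⟪gradient f (x s), deriv x s⟫)
        + (M - 1) * (f (x s) - f xstar)) s := by
  have hgap_cont : Continuous fun u => f (x u) - f xstar :=
    (hf.continuous.comp hx.continuous).sub continuous_const
  have hfx : HasDerivAt (fun r => f (x r) - f xstar) ⟪gradient f (x s), deriv x s⟫ s :=
    ((hf _).hasGradientAt.comp_hasDerivAt (hx s).hasDerivAt).sub_const _
  refine ((((hζ s).hasDerivAt.inner ℝ (hasDerivAt_const s xstar)).sub
    ((hW _).hasGradientAt.comp_hasDerivAt (hζ s).hasDerivAt)).sub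
    ((hμ s).hasDerivAt.mul hfx)).add
    (((hgap_cont.integral_hasStrictDerivAt 0 s).hasDerivAt).const_mul (M - 1)) |>.congr_deriv ?_
  simp

theorem imdEnergy_deriv_nonneg (hf_conv : ConvexOn ℝ Set.univ f) (hf : Differentiable ℝ f)
    (hmin : ∀ y, f xstar ≤ f y) (hW : Differentiable ℝ W) (hμ : Differentiable ℝ μ)
    (hζ : Differentiable ℝ ζ) (hx : Differentiable ℝ x) {s : ℝ}
    (hζ' : deriv ζ s = -gradient f (x s))
    (hmirror : μ s • deriv x s + x s = gradient W (ζ s)) (hμM : deriv μ s ≤ M) :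
    0 ≤ deriv (imdEnergy f W μ ζ x xstar M) s := by
  rw [(hasDerivAt_imdEnergy xstar M hf hW hμ hζ hx s).deriv]
  have hdissipation : ⟪deriv ζ s, xstar⟫ - ⟪gradient W (ζ s), deriv ζ s⟫
      - μ s * ⟪gradient f (x s), deriv x s⟫ = -⟪gradient f (x s), xstar - x s⟫ := by
    rw [hζ', ← hmirror]
    simp only [inner_neg_left, inner_neg_right, inner_add_left, inner_sub_right,
      real_inner_smul_left, real_inner_comm (deriv x s), real_inner_comm (x s)]
    ring
  have hgrad := hf_conv.inner_gradient_sub_le (Set.mem_univ _) (Set.mem_univ xstar) (hf (x s))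
  have hgap : 0 ≤ (M - deriv μ s) * (f (x s) - f xstar) :=
    mul_nonneg (sub_nonneg.2 hμM) (sub_nonneg.2 (hmin _))
  linarith

theorem imdEnergy_zero_le (hf_conv : ConvexOn ℝ Set.univ f) (hf : Differentiable ℝ f)
    (hmin : ∀ y, f xstar ≤ f y) (hW : Differentiable ℝ W) (hμ : Differentiable ℝ μ)
    (hζ : Differentiable ℝ ζ) (hx : Differentiable ℝ x)
    (hζ' : ∀ s ≥ (0 : ℝ), deriv ζ s = -gradient f (x s))
    (hmirror : ∀ s ≥ (0 : ℝ), μ s • deriv x s + x s = gradient W (ζ s))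
    {t : ℝ} (ht : 0 ≤ t) (hμM : ∀ s ∈ Set.Icc 0 t, deriv μ s ≤ M) :
    imdEnergy f W μ ζ x xstar M 0 ≤ imdEnergy f W μ ζ x xstar M t := by
  have hE : Differentiable ℝ (imdEnergy f W μ ζ x xstar M) := fun s =>
    (hasDerivAt_imdEnergy xstar M hf hW hμ hζ hx s).differentiableAt
  refine monotoneOn_of_deriv_nonneg (convex_Icc 0 t) hE.continuous.continuousOn
    hE.differentiableOn (fun s hs => ?_) (Set.left_mem_Icc.2 ht) (Set.right_mem_Icc.2 ht) ht
  rw [interior_Icc] at hs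
  exact imdEnergy_deriv_nonneg xstar M hf_conv hf hmin hW hμ hζ hx (hζ' s hs.1.le)
    (hmirror s hs.1.le) (hμM s (Set.Ioo_subset_Icc_self hs))

end InertialMirrorDescent

theorem imd_integrated_bound_general
    {H : Type*} [NormedAddCommGroup H] [InnerProductSpace ℝ H]
    [FiniteDimensional ℝ H]
    (f W : H → ℝ) (μ : ℝ → ℝ) (ζ x : ℝ → H) (xstar : H)
    (hf_conv : ConvexOn ℝ Set.univ f)
    (hf_diff : Differentiable ℝ f)
    (hmin : ∀ y, f xstar ≤ f y)
    (hW_diff : Differentiable ℝ W)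
    (hW0 : W 0 = 0)
    (hV_fin : BddAbove (Set.range fun z => ⟪z, xstar⟫ - W z))
    (hμ_diff : Differentiable ℝ μ)
    (hμ'_cont : Continuous (deriv μ))
    (hζ_diff : Differentiable ℝ ζ) (hx_diff : Differentiable ℝ x)
    (hζ0 : ζ 0 = 0)
    (hζ' : ∀ t ≥ (0 : ℝ), deriv ζ t = -gradient f (x t))
    (hmirror : ∀ t ≥ (0 : ℝ), μ t • deriv x t + x t = gradient W (ζ t)) :
    ∀ t > (0 : ℝ),
      (∫ s in (0 : ℝ)..t, f (x s)) - t * f xstar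
        ≤ (⨆ z : H, (⟪z, xstar⟫ - W z)) - μ t * (f (x t) - f xstar)
            + μ 0 * (f (x 0) - f xstar)
            + sSup (deriv μ '' Set.Icc 0 t)
              * ∫ s in (0 : ℝ)..t, (f (x s) - f xstar) := by
  intro t ht
  set M := sSup (deriv μ '' Set.Icc 0 t)
  have hμM : ∀ s ∈ Set.Icc 0 t, deriv μ s ≤ M := fun s hs =>
    le_csSup ((isCompact_Icc.image hμ'_cont).bddAbove) (Set.mem_image_of_mem _ hs)
  have hE := imdEnergy_zero_le xstar M hf_conv hf_diff hmin hW_diff hμ_diff hζ_diff hx_diff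
    hζ' hmirror ht.le hμM
  rw [imdEnergy_zero xstar M hW0 hζ0, imdEnergy] at hE
  have hV : ⟪ζ t, xstar⟫ - W (ζ t) ≤ ⨆ z : H, (⟪z, xstar⟫ - W z) := le_ciSup hV_fin (ζ t)
  have hintegral : (∫ s in (0 : ℝ)..t, f (x s)) - t * f xstar
      = ∫ s in (0 : ℝ)..t, (f (x s) - f xstar) := by
    have hfx : Continuous fun s => f (x s) := hf_diff.continuous.comp hx_diff.continuous
    simp [intervalIntegral.integral_sub (hfx.intervalIntegrable 0 t) intervalIntegrable_const]
  linarith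

/-- Along any solution of the continuous inertial mirror descent system, for every
`t > 0` the integrated bound
`∫₀ᵗ f(x(s)) ds − t·f* ≤ V(x*) − μ(t)·(f(x(t)) − f*) + μ(0)·(f(x(0)) − f*)
  + (sup_{s∈[0,t]} μ'(s)) · ∫₀ᵗ (f(x(s)) − f*) ds`
holds, where `V(x*) = sup_ζ (⟨ζ, x*⟩ − W(ζ))`. -/
theorem imd_integrated_bound
    {H : Type*} [NormedAddCommGroup H] [InnerProductSpace ℝ H]
    [FiniteDimensional ℝ H]
    (f W : H → ℝ) (μ : ℝ → ℝ) (ζ x : ℝ → H) (xstar : H)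
    (hf_conv : ConvexOn ℝ Set.univ f)
    (hf_diff : Differentiable ℝ f)
    (hmin : ∀ y, f xstar ≤ f y)
    (hW_conv : ConvexOn ℝ Set.univ W)
    (hW_diff : Differentiable ℝ W)
    (hW_grad_cont : Continuous (gradient W))
    (hW0 : W 0 = 0) (hWgrad0 : gradient W 0 = 0)
    (hV_fin : BddAbove (Set.range fun z => ⟪z, xstar⟫ - W z))
    (hμ_diff : Differentiable ℝ μ)
    (hμ'_cont : Continuous (deriv μ))
    (hμ_nonneg : ∀ t ≥ (0 : ℝ), 0 ≤ μ t)
    (hζ_diff : Differentiable ℝ ζ) (hx_diff : Differentiable ℝ x)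
    (hζ0 : ζ 0 = 0) (hx0 : x 0 = gradient W 0)
    (hζ' : ∀ t ≥ (0 : ℝ), deriv ζ t = -gradient f (x t))
    (hmirror : ∀ t ≥ (0 : ℝ), μ t • deriv x t + x t = gradient W (ζ t))
    (hfx_cont : Continuous (fun s => f (x s)))
    (hfxμ'_cont : Continuous (fun s => f (x s) * deriv μ s))
    (hfx_diff : Differentiable ℝ (fun s => f (x s))) :
    ∀ t > (0 : ℝ),
      (∫ s in (0 : ℝ)..t, f (x s)) - t * f xstar
        ≤ (⨆ z : H, (⟪z, xstar⟫ - W z)) - μ t * (f (x t) - f xstar)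
            + μ 0 * (f (x 0) - f xstar)
            + sSup (deriv μ '' Set.Icc 0 t)
              * ∫ s in (0 : ℝ)..t, (f (x s) - f xstar) :=
  imd_integrated_bound_general f W μ ζ x xstar hf_conv hf_diff hmin hW_diff hW0 hV_fin hμ_diff
    hμ'_cont hζ_diff hx_diff hζ0 hζ' hmirror
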